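/- Let U ⊆ ℝᵐ be open and P, Q : U → ℂ be smooth functions satisfying ΔP = 0, ΔQ = 0 and κ(P,P) = 0, κ(P,Q) = 0, κ(Q,Q) = 0 on U. Then the quotient Φ = P/Q, defined on the open set U ∩ {x : Q(x) ≠ 0}, satisfies ΔΦ = 0 and κ(Φ,Φ) = 0 there; i.e. Φ is again harmonic and horizontally conformal. -/

import Mathlib

open Filter Topology

/-- The partial derivative in direction `k` of a complex-valued function on `ℝᵐ`. -/
noncomputable def pd {m : ℕ} (k : Fin m) (f : (Fin m → ℝ) → ℂ) : (Fin m → ℝ) → ℂ :=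
  fun x => fderiv ℝ f x (Pi.single k 1)

/-- The Euclidean Laplacian `Δf = ∑ₖ ∂²f/∂xₖ²`. -/
noncomputable def lap {m : ℕ} (f : (Fin m → ℝ) → ℂ) : (Fin m → ℝ) → ℂ :=
  fun x => ∑ k : Fin m, pd k (pd k f) x

/-- The conformality operator `κ(f,g) = ∑ₖ (∂f/∂xₖ)(∂g/∂xₖ)`. -/
noncomputable def conf {m : ℕ} (f g : (Fin m → ℝ) → ℂ) : (Fin m → ℝ) → ℂ :=
  fun x => ∑ k : Fin m, pd k f x * pd k g x

section aux
variable {m : ℕ} {k : Fin m} {f g : (Fin m → ℝ) → ℂ} {x : Fin m → ℝ}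

lemma pd_congr (h : f =ᶠ[𝓝 x] g) : pd k f x = pd k g x := by
  unfold pd; rw [h.fderiv_eq]

lemma pd_add (hf : DifferentiableAt ℝ f x) (hg : DifferentiableAt ℝ g x) :
    pd k (fun y => f y + g y) x = pd k f x + pd k g x := by
  unfold pd; rw [fderiv_fun_add hf hg]; simp

lemma pd_mul (hf : DifferentiableAt ℝ f x) (hg : DifferentiableAt ℝ g x) :
    pd k (fun y => f y * g y) x = pd k f x * g x + f x * pd k g x := by
  unfold pd; rw [fderiv_fun_mul hf hg]; simp [smul_eq_mul]; ring

lemma pd_neg : pd k (fun y => -(f y)) x = -(pd k f x) := by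
  unfold pd; rw [fderiv_fun_neg]; simp

lemma pd_inv (hf : DifferentiableAt ℝ f x) (hx : f x ≠ 0) :
    pd k (fun y => (f y)⁻¹) x = -(pd k f x) * ((f x) * (f x))⁻¹ := by
  unfold pd
  have h := fderiv_comp (𝕜 := ℝ) x (differentiableAt_inv hx) hf
  rw [show (fun y => (f y)⁻¹) = Inv.inv ∘ f from rfl, h, fderiv_inv' hx]
  simp only [ContinuousLinearMap.comp_apply, ContinuousLinearMap.neg_apply,
    ContinuousLinearMap.mulLeftRight_apply, mul_inv]
  ring

lemma pd_contDiffAt (hf : ContDiffAt ℝ (⊤ : ℕ∞) f x) : ContDiffAt ℝ (⊤ : ℕ∞) (pd k f) x := by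
  have h1 : ContDiffAt ℝ (⊤ : ℕ∞) (fderiv ℝ f) x := hf.fderiv_right (by simp)
  exact h1.clm_apply contDiffAt_const

end aux

theorem stmt7 (m : ℕ) (U : Set (Fin m → ℝ)) (hU : IsOpen U)
    (P Q : (Fin m → ℝ) → ℂ)
    (hP : ContDiffOn ℝ (⊤ : ℕ∞) P U) (hQ : ContDiffOn ℝ (⊤ : ℕ∞) Q U)
    (hPl : ∀ x ∈ U, lap P x = 0) (hQl : ∀ x ∈ U, lap Q x = 0)
    (hPP : ∀ x ∈ U, conf P P x = 0) (hPQ : ∀ x ∈ U, conf P Q x = 0)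
    (hQQ : ∀ x ∈ U, conf Q Q x = 0) :
    ∀ x ∈ U, Q x ≠ 0 →
      lap (fun y => P y / Q y) x = 0 ∧
      conf (fun y => P y / Q y) (fun y => P y / Q y) x = 0 := by
  intro x hxU hxQ
  set V : Set (Fin m → ℝ) := U ∩ Q ⁻¹' {0}ᶜ with hVdef
  have hVopen : IsOpen V := hQ.continuousOn.isOpen_inter_preimage hU isOpen_compl_singleton
  have hxV : x ∈ V := ⟨hxU, hxQ⟩
  have hcP : ∀ y ∈ V, ContDiffAt ℝ (⊤ : ℕ∞) P y := fun y hy => hP.contDiffAt (hU.mem_nhds hy.1)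
  have hcQ : ∀ y ∈ V, ContDiffAt ℝ (⊤ : ℕ∞) Q y := fun y hy => hQ.contDiffAt (hU.mem_nhds hy.1)
  have hQne : ∀ y ∈ V, Q y ≠ 0 := fun y hy => hy.2
  -- first derivative formula on V
  have hder : ∀ (k : Fin m), ∀ y ∈ V, pd k (fun z => P z / Q z) y =
      pd k P y * (Q y)⁻¹ + P y * (-(pd k Q y) * (Q y * Q y)⁻¹) := by
    intro k y hy
    have dP : DifferentiableAt ℝ P y := ((hcP y hy).differentiableAt (by simp))
    have dQ : DifferentiableAt ℝ Q y := ((hcQ y hy).differentiableAt (by simp))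
    have dQi : DifferentiableAt ℝ (fun z => (Q z)⁻¹) y := dQ.inv (hQne y hy)
    have h1 : pd k (fun z => P z / Q z) y = pd k (fun z => P z * (Q z)⁻¹) y := by
      simp only [div_eq_mul_inv]
    rw [h1, pd_mul dP dQi, pd_inv dQ (hQne y hy)]
  -- pointwise data at x
  have dP : DifferentiableAt ℝ P x := ((hcP x hxV).differentiableAt (by simp))
  have dQ : DifferentiableAt ℝ Q x := ((hcQ x hxV).differentiableAt (by simp))
  have dQi : DifferentiableAt ℝ (fun z => (Q z)⁻¹) x := dQ.inv hxQ
  have dQ2 : DifferentiableAt ℝ (fun z => Q z * Q z) x := dQ.mul dQ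
  have hQ2ne : Q x * Q x ≠ 0 := mul_ne_zero hxQ hxQ
  have dQ2i : DifferentiableAt ℝ (fun z => (Q z * Q z)⁻¹) x := dQ2.inv hQ2ne
  -- second derivative formula at x
  have hsum : ∀ k : Fin m, pd k (pd k (fun z => P z / Q z)) x =
      pd k (pd k P) x * (Q x)⁻¹
      + (pd k P x * pd k Q x) * (-2 * (Q x * Q x)⁻¹)
      + pd k (pd k Q) x * (-(P x) * (Q x * Q x)⁻¹)
      + (pd k Q x * pd k Q x) * (2 * P x * (Q x * Q x * Q x)⁻¹) := by
    intro k
    have dPk : DifferentiableAt ℝ (pd k P) x :=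
      ((pd_contDiffAt (hcP x hxV)).differentiableAt (by simp))
    have dQk : DifferentiableAt ℝ (pd k Q) x :=
      ((pd_contDiffAt (hcQ x hxV)).differentiableAt (by simp))
    have hEq : pd k (fun z => P z / Q z) =ᶠ[𝓝 x]
        (fun y => pd k P y * (Q y)⁻¹ + P y * (-(pd k Q y) * (Q y * Q y)⁻¹)) := by
      filter_upwards [hVopen.mem_nhds hxV] with y hy using hder k y hy
    have hcongr : pd k (pd k (fun z => P z / Q z)) x =
        pd k (fun y => pd k P y * (Q y)⁻¹ + P y * (-(pd k Q y) * (Q y * Q y)⁻¹)) x := by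
      exact pd_congr hEq
    rw [hcongr]
    have d1 : DifferentiableAt ℝ (fun y => pd k P y * (Q y)⁻¹) x := dPk.mul dQi
    have dnQk : DifferentiableAt ℝ (fun y => -(pd k Q y)) x := dQk.neg
    have d3 : DifferentiableAt ℝ (fun y => -(pd k Q y) * (Q y * Q y)⁻¹) x := dnQk.mul dQ2i
    have d2 : DifferentiableAt ℝ (fun y => P y * (-(pd k Q y) * (Q y * Q y)⁻¹)) x := dP.mul d3
    rw [pd_add d1 d2, pd_mul dPk dQi, pd_mul dP d3, pd_mul dnQk dQ2i,
      pd_inv dQ hxQ, pd_inv dQ2 hQ2ne, pd_mul dQ dQ, pd_neg]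
    field_simp [hxQ]
    ring
  have hconf1 : ∀ k : Fin m,
      pd k (fun z => P z / Q z) x * pd k (fun z => P z / Q z) x =
      (pd k P x * pd k P x) * ((Q x * Q x)⁻¹)
      + (pd k P x * pd k Q x) * (-2 * P x * (Q x * Q x * Q x)⁻¹)
      + (pd k Q x * pd k Q x) * (P x * P x * (Q x * Q x * (Q x * Q x))⁻¹) := by
    intro k
    rw [hder k x hxV]
    field_simp [hxQ]
    ring
  constructor
  · have : lap (fun z => P z / Q z) x =
        lap P x * (Q x)⁻¹ + conf P Q x * (-2 * (Q x * Q x)⁻¹)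
        + lap Q x * (-(P x) * (Q x * Q x)⁻¹)
        + conf Q Q x * (2 * P x * (Q x * Q x * Q x)⁻¹) := by
      simp only [lap, conf, Finset.sum_mul, ← Finset.sum_add_distrib]
      exact Finset.sum_congr rfl fun k _ => hsum k
    rw [this, hPl x hxU, hQl x hxU, hPQ x hxU, hQQ x hxU]
    ring
  · have : conf (fun z => P z / Q z) (fun z => P z / Q z) x =
        conf P P x * ((Q x * Q x)⁻¹)
        + conf P Q x * (-2 * P x * (Q x * Q x * Q x)⁻¹)
        + conf Q Q x * (P x * P x * (Q x * Q x * (Q x * Q x))⁻¹) := by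
      simp only [conf, Finset.sum_mul, ← Finset.sum_add_distrib]
      exact Finset.sum_congr rfl fun k _ => hconf1 k
    rw [this, hPP x hxU, hPQ x hxU, hQQ x hxU]
    ring
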